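/- Define W(x) = √(2 − √x) / (2π·x^{3/4}) for x ∈ (0,4). Then W(x) ≥ 0 on (0,4) and for every natural number m, ∫₀⁴ x^m · W(x) dx = A_m(2, 1/2) = (1/2)·Γ(2m + 1/2) / (m!·Γ(m + 3/2)). -/

import Mathlib

/-!
Substituting `x = t²` turns the `m`-th moment of `W` into `π⁻¹ ∫₀² t^(2m - 1/2) (2 - t)^(1/2) dt`,
a scaled Beta integral equal to `π⁻¹ 2^(2m+1) B(2m + 1/2, 3/2)`. Legendre's duplication formula
at `m + 1` turns this into the stated Gamma quotient. On the other side, the product defining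
`A_m(p, r)` is a falling factorial, i.e. a quotient of Gamma values by `Γ(x + 1) = x Γ(x)`.
-/

open Real

/-- The Raney numbers (two-parameter Fuss–Catalan numbers):
`A 0 (p,r) = 1` and `A m (p,r) = (r/m!)·∏_{i=1}^{m−1} (m·p + r − i)` for `m ≥ 1`. -/
noncomputable def raney (p r : ℝ) : ℕ → ℝ
  | 0 => 1
  | (m + 1) => (r / (Nat.factorial (m + 1) : ℝ)) *
      ∏ i ∈ Finset.Icc 1 m, (((m : ℝ) + 1) * p + r - (i : ℝ))

open scoped Nat

theorem prod_Icc_sub_eq_Gamma_div (x : ℝ) (n : ℕ) (hn : (n : ℝ) < x) :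
    ∏ i ∈ Finset.Icc 1 n, (x - i) = Gamma x / Gamma (x - n) := by
  induction n with
  | zero => simp [div_self (Gamma_pos_of_pos (by simpa using hn)).ne']
  | succ n ih =>
    push_cast at hn ⊢
    have hpos : 0 < x - (n + 1) := by linarith
    rw [Finset.prod_Icc_succ_top (by omega), ih (by linarith),
      show x - n = (x - (n + 1)) + 1 by ring, Gamma_add_one hpos.ne']
    have hGamma := (Gamma_pos_of_pos hpos).ne'
    push_cast
    field_simp

theorem factorial_mul_Gamma_add_three_halves (m : ℕ) :
    m ! * Gamma (m + 3 / 2) = √π * Gamma (2 * m + 2) / 2 ^ (2 * m + 1) := by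
  have h := Gamma_mul_Gamma_add_half (m + 1)
  rw [show (m : ℝ) + 1 = (m : ℕ) + 1 by rfl, Gamma_nat_eq_factorial,
    show (1 : ℝ) - 2 * (m + 1) = -((2 * m + 1 : ℕ) : ℝ) by push_cast; ring,
    rpow_neg zero_le_two, rpow_natCast] at h
  rw [eq_div_iff (by positivity), show (m : ℝ) + 3 / 2 = m + 1 + 1 / 2 by ring, h,
    show 2 * ((m : ℝ) + 1) = 2 * m + 2 by ring]
  field_simp

theorem integral_rpow_mul_sub_rpow {a s t : ℝ} (ha : 0 < a) (hs : 0 < s) (ht : 0 < t) :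
    ∫ x in (0 : ℝ)..a, x ^ (s - 1) * (a - x) ^ (t - 1) =
      a ^ (s + t - 1) * (Gamma s * Gamma t / Gamma (s + t)) := by
  have hbeta := Complex.betaIntegral_scaled s t ha
  have hGamma := Complex.Gamma_mul_Gamma_eq_betaIntegral (s := s) (t := t)
    (by simpa using hs) (by simpa using ht)
  rw [← Complex.ofReal_add, Complex.Gamma_ofReal, Complex.Gamma_ofReal, Complex.Gamma_ofReal]
    at hGamma
  have hB : Complex.betaIntegral s t = ((Gamma s * Gamma t / Gamma (s + t) : ℝ) : ℂ) := by
    rw [Complex.ofReal_div, Complex.ofReal_mul, hGamma,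
      mul_div_cancel_left₀ _ (by exact_mod_cast (Gamma_pos_of_pos (add_pos hs ht)).ne')]
  have hcast : ((∫ x in (0 : ℝ)..a, x ^ (s - 1) * (a - x) ^ (t - 1) : ℝ) : ℂ) =
      ∫ x in (0 : ℝ)..a, (x : ℂ) ^ ((s : ℂ) - 1) * ((a : ℂ) - x) ^ ((t : ℂ) - 1) := by
    rw [← intervalIntegral.integral_ofReal]
    refine intervalIntegral.integral_congr fun x hx => ?_
    rw [Set.uIcc_of_le ha.le] at hx
    push_cast [Complex.ofReal_cpow hx.1, Complex.ofReal_cpow (sub_nonneg.2 hx.2)]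
    rfl
  rw [hB, ← hcast, show (s : ℂ) + t - 1 = ((s + t - 1 : ℝ) : ℂ) by push_cast; rfl,
    ← Complex.ofReal_cpow ha.le, ← Complex.ofReal_mul] at hbeta
  exact Complex.ofReal_injective hbeta

theorem intervalIntegral.integral_comp_sq_mul {b : ℝ} (hb : 0 ≤ b) (g : ℝ → ℝ) :
    ∫ t in (0 : ℝ)..b, g (t ^ 2) * (2 * t) = ∫ u in (0 : ℝ)..b ^ 2, g u := by
  have := intervalIntegral.integral_comp_mul_deriv_of_deriv_nonneg (a := 0) (b := b) (g := g)
    (f := fun t => t ^ 2) (f' := fun t => 2 * t) (continuous_pow 2).continuousOn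
    (fun t _ => by simpa using hasDerivAt_pow 2 t) (fun t ht => by
      simp only [min_eq_left hb] at ht; linarith [ht.1])
  simpa using this

theorem raney_eq_Gamma (p r : ℝ) (m : ℕ) (h : 0 < m * (p - 1) + r) :
    raney p r m = r * Gamma (m * p + r) / (m ! * Gamma (m * p + r - m + 1)) := by
  cases m with
  | zero =>
    simp only [raney, CharP.cast_eq_zero, zero_mul, zero_add, sub_zero, Nat.factorial_zero,
      Nat.cast_one, one_mul] at h ⊢
    rw [Gamma_add_one h.ne', div_self (mul_pos h (Gamma_pos_of_pos h)).ne']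
  | succ m =>
    push_cast at h ⊢
    rw [raney, prod_Icc_sub_eq_Gamma_div _ _ (by linarith),
      show (m + 1) * p + r - (m + 1) + 1 = (m + 1) * p + r - m by ring]
    ring

noncomputable def raneyDensity (x : ℝ) : ℝ := √(2 - √x) / (2 * π * x ^ ((3 : ℝ) / 4))

theorem raneyDensity_nonneg {x : ℝ} (hx : 0 ≤ x) : 0 ≤ raneyDensity x := by
  unfold raneyDensity; positivity

theorem sq_pow_mul_raneyDensity_sq_mul (m : ℕ) {t : ℝ} (ht : 0 < t) :
    (t ^ 2) ^ m * raneyDensity (t ^ 2) * (2 * t) =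
      π⁻¹ * (t ^ ((2 * m + 1 / 2 : ℝ) - 1) * (2 - t) ^ ((3 / 2 : ℝ) - 1)) := by
  have hsqrt : √(t ^ 2) = t := sqrt_sq ht.le
  have hpow : (t ^ 2) ^ ((3 : ℝ) / 4) = t ^ ((3 : ℝ) / 2) := by
    rw [← rpow_natCast, ← rpow_mul ht.le]; norm_num
  have hexp : t ^ ((2 * m + 1 / 2 : ℝ) - 1) = (t ^ 2) ^ m * t / t ^ ((3 : ℝ) / 2) := by
    rw [eq_div_iff (rpow_pos_of_pos ht _).ne', ← rpow_add ht, ← pow_mul, ← pow_succ,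
      ← rpow_natCast]
    congr 1; push_cast; ring
  rw [raneyDensity, hsqrt, hpow, hexp, show (3 / 2 : ℝ) - 1 = 1 / 2 by norm_num, ← sqrt_eq_rpow]
  field_simp

theorem integral_pow_mul_raneyDensity (m : ℕ) :
    ∫ x in (0 : ℝ)..4, x ^ m * raneyDensity x =
      1 / 2 * Gamma (2 * m + 1 / 2) / (m ! * Gamma (m + 3 / 2)) := by
  calc ∫ x in (0 : ℝ)..4, x ^ m * raneyDensity x
      = ∫ t in (0 : ℝ)..2, (t ^ 2) ^ m * raneyDensity (t ^ 2) * (2 * t) := by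
        rw [intervalIntegral.integral_comp_sq_mul zero_le_two (fun x => x ^ m * raneyDensity x)]
        norm_num
    _ = ∫ t in (0 : ℝ)..2, π⁻¹ * (t ^ ((2 * m + 1 / 2 : ℝ) - 1) * (2 - t) ^ ((3 / 2 : ℝ) - 1)) :=
        intervalIntegral.integral_congr_uIoo fun t ht =>
          sq_pow_mul_raneyDensity_sq_mul m (by simpa using ht.1)
    _ = π⁻¹ * (2 ^ ((2 * m + 1 / 2 : ℝ) + 3 / 2 - 1) *
          (Gamma (2 * m + 1 / 2) * Gamma (3 / 2) / Gamma (2 * m + 1 / 2 + 3 / 2))) := by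
        rw [intervalIntegral.integral_const_mul,
          integral_rpow_mul_sub_rpow two_pos (by positivity) (by norm_num)]
    _ = 1 / 2 * Gamma (2 * m + 1 / 2) / (m ! * Gamma (m + 3 / 2)) := by
        rw [factorial_mul_Gamma_add_three_halves,
          show (2 * m + 1 / 2 : ℝ) + 3 / 2 - 1 = ((2 * m + 1 : ℕ) : ℝ) by push_cast; ring,
          rpow_natCast, show (3 / 2 : ℝ) = 1 / 2 + 1 by norm_num, Gamma_add_one (by norm_num),
          Gamma_one_half_eq, show (2 * m + 1 / 2 : ℝ) + (1 / 2 + 1) = 2 * m + 2 by ring]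
        field_simp
        exact sq_sqrt pi_pos.le

/-- For `W(x) = √(2 − √x)/(2π·x^(3/4))` on `(0,4)`: `W ≥ 0` on `(0,4)` and
`∫₀⁴ x^m·W(x) dx = A_m(2,1/2) = (1/2)·Γ(2m + 1/2)/(m!·Γ(m + 3/2))` for every `m`. -/
theorem stmt_7 :
    (∀ x ∈ Set.Ioo (0 : ℝ) 4,
      0 ≤ Real.sqrt (2 - Real.sqrt x) / (2 * π * x ^ ((3 : ℝ) / 4))) ∧
    ∀ m : ℕ,
      (∫ x in (0:ℝ)..4,
        x ^ m * (Real.sqrt (2 - Real.sqrt x) / (2 * π * x ^ ((3 : ℝ) / 4))))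
      = raney 2 (1 / 2) m ∧
      raney 2 (1 / 2) m =
        (1 / 2) * Gamma (2 * (m : ℝ) + 1 / 2) /
          ((Nat.factorial m : ℝ) * Gamma ((m : ℝ) + 3 / 2)) := by
  refine ⟨fun x hx => raneyDensity_nonneg hx.1.le, fun m => ?_⟩
  have hraney :
      raney 2 (1 / 2) m = 1 / 2 * Gamma (2 * m + 1 / 2) / (m ! * Gamma (m + 3 / 2)) := by
    rw [raney_eq_Gamma _ _ _ (by positivity)]
    ring_nf
  exact ⟨(integral_pow_mul_raneyDensity m).trans hraney.symm, hraney⟩
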